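/- Let C ⊆ 𝔽₂ⁿ and C′ ⊆ 𝔽₂^{n′} be 2-summable binary linear codes. Then the dual codes C⊥ and C′⊥ are also 2-summable, and (C ⊕₂ C′)⊥ = C⊥ ⊕₂ C′⊥. -/

import Mathlib

open scoped BigOperators

/-- A binary linear code of length `n`: an `𝔽₂`-linear subspace of `𝔽₂ⁿ`. -/
abbrev Code (n : ℕ) : Type := Submodule (ZMod 2) (Fin n → ZMod 2)

/-- The `𝔽₂`-dimension of a code. -/
noncomputable def codeDim {n : ℕ} (C : Code n) : ℕ := Module.finrank (ZMod 2) C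

/-- The dual code `C⊥ = {x : ∀ c ∈ C, ∑ i, x i * c i = 0}`. -/
def dualCode {n : ℕ} (C : Code n) : Code n where
  carrier := {x | ∀ c ∈ C, ∑ i, x i * c i = 0}
  add_mem' := by
    intro a b ha hb c hc
    simp only [Set.mem_setOf_eq] at ha hb
    simp [Pi.add_apply, add_mul, Finset.sum_add_distrib, ha c hc, hb c hc]
  zero_mem' := by intro c hc; simp
  smul_mem' := by
    intro t x hx c hc
    simp only [Set.mem_setOf_eq] at hx
    simp [Pi.smul_apply, smul_eq_mul, mul_assoc, ← Finset.mul_sum, hx c hc]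

/-- Restriction (projection) of a code onto the coordinates in a finset `s`,
viewed as a code of length `s.card`. -/
noncomputable def restrictCode {n : ℕ} (C : Code n) (s : Finset (Fin n)) : Code s.card :=
  C.map (LinearMap.funLeft (ZMod 2) (ZMod 2) (fun j => (s.orderIsoOfFin rfl j).1))

/-- `(J, Jᶜ)` is a `k`-separation of `C`. -/
noncomputable def IsKSep {n : ℕ} (k : ℕ) (C : Code n) (J : Finset (Fin n)) : Prop :=
  k ≤ J.card ∧ k ≤ Jᶜ.card ∧
    codeDim (restrictCode C J) + codeDim (restrictCode C Jᶜ) ≤ codeDim C + (k - 1)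

/-- `(J, Jᶜ)` is an exact `k`-separation of `C`. -/
noncomputable def IsExactKSep {n : ℕ} (k : ℕ) (C : Code n) (J : Finset (Fin n)) : Prop :=
  k ≤ J.card ∧ k ≤ Jᶜ.card ∧
    codeDim (restrictCode C J) + codeDim (restrictCode C Jᶜ) = codeDim C + (k - 1)

/-- `C` is `k`-connected: it has no `k'`-separation for any `1 ≤ k' < k`. -/
noncomputable def KConnected {n : ℕ} (k : ℕ) (C : Code n) : Prop :=
  ∀ k' : ℕ, 1 ≤ k' → k' < k → ∀ J : Finset (Fin n), ¬ IsKSep k' C J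

/-- A `3`-connected code is internally `4`-connected if all its `3`-separations are minimal. -/
noncomputable def Internally4Connected {n : ℕ} (C : Code n) : Prop :=
  KConnected 3 C ∧ ∀ J : Finset (Fin n), IsKSep 3 C J → (J.card = 3 ∨ Jᶜ.card = 3)

/-- The submodule of words vanishing on all coordinates in `Y`. -/
def zeroOn {n : ℕ} (Y : Finset (Fin n)) : Code n where
  carrier := {x | ∀ i ∈ Y, x i = 0}
  add_mem' := by intro a b ha hb i hi; simp [Pi.add_apply, ha i hi, hb i hi]
  zero_mem' := by intro i _; rfl
  smul_mem' := by intro t x hx i hi; simp [Pi.smul_apply, hx i hi]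

/-- The punctured code `C/X`: project away the coordinates in `X`. -/
noncomputable def punctureCode {n : ℕ} (C : Code n) (X : Finset (Fin n)) : Code Xᶜ.card :=
  restrictCode C Xᶜ

/-- The shortened code `C∖Y`. -/
noncomputable def shortenCode {n : ℕ} (C : Code n) (Y : Finset (Fin n)) : Code Yᶜ.card :=
  restrictCode (C ⊓ zeroOn Y) Yᶜ

/-- The minor `C/X∖Y` of `C` (for disjoint `X`, `Y`). -/
noncomputable def minorCode {n : ℕ} (C : Code n) (X Y : Finset (Fin n)) :
    Code ((X ∪ Y)ᶜ.card) :=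
  restrictCode (C ⊓ zeroOn Y) (X ∪ Y)ᶜ

/-- Equivalence of codes: one is obtained from the other by a bijective relabelling
(permutation) of coordinates. -/
def CodeEquiv {m m' : ℕ} (D : Code m) (D' : Code m') : Prop :=
  ∃ e : Fin m ≃ Fin m',
    D' = D.map (LinearMap.funLeft (ZMod 2) (ZMod 2) e.symm)

/-- `D` is equivalent to a minor of `C`. -/
noncomputable def EquivToMinor {m n : ℕ} (D : Code m) (C : Code n) : Prop :=
  ∃ X Y : Finset (Fin n), Disjoint X Y ∧ CodeEquiv D (minorCode C X Y)

/-- `D` is equivalent to a proper minor of `C`. -/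
noncomputable def EquivToProperMinor {m n : ℕ} (D : Code m) (C : Code n) : Prop :=
  ∃ X Y : Finset (Fin n), Disjoint X Y ∧ (X ∪ Y).Nonempty ∧ CodeEquiv D (minorCode C X Y)

/-- The word `(0,…,0,1)`. -/
def unitLast (n : ℕ) : Fin n → ZMod 2 := fun i => if (i : ℕ) = n - 1 then 1 else 0

/-- The word `(1,0,…,0)`. -/
def unitFirst (n : ℕ) : Fin n → ZMod 2 := fun i => if (i : ℕ) = 0 then 1 else 0

/-- The word `(0,…,0,1,1,1)`. -/
def omegaLast (n : ℕ) : Fin n → ZMod 2 := fun i => if n - 3 ≤ (i : ℕ) then 1 else 0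

/-- The word `(1,1,1,0,…,0)`. -/
def omegaFirst (n : ℕ) : Fin n → ZMod 2 := fun i => if (i : ℕ) < 3 then 1 else 0

/-- Codes `C ⊆ 𝔽₂ⁿ`, `C' ⊆ 𝔽₂^n'` (with `n, n' ≥ 3`) are 2-summable. -/
def TwoSummable {n n' : ℕ} (C : Code n) (C' : Code n') : Prop :=
  3 ≤ n ∧ 3 ≤ n' ∧ unitLast n ∉ C ∧ unitLast n ∉ dualCode C ∧
    unitFirst n' ∉ C' ∧ unitFirst n' ∉ dualCode C'

/-- The 2-sum `C ⊕₂ C'`. -/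
def twoSum {n n' : ℕ} (C : Code n) (C' : Code n') (hn : 3 ≤ n) (hn' : 3 ≤ n') :
    Code (n - 1 + (n' - 1)) where
  carrier := {x | ∃ c ∈ C, ∃ c' ∈ C',
    c ⟨n - 1, by omega⟩ = c' ⟨0, by omega⟩ ∧
    ∀ i : Fin (n - 1 + (n' - 1)),
      x i = if h : (i : ℕ) < n - 1 then c ⟨(i : ℕ), by omega⟩
            else c' ⟨(i : ℕ) - (n - 1) + 1, by have := i.isLt; omega⟩}
  add_mem' := by
    rintro a b ⟨c, hc, c', hc', he, ha⟩ ⟨d, hd, d', hd', he', hb⟩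
    refine ⟨c + d, C.add_mem hc hd, c' + d', C'.add_mem hc' hd',
      by simp [Pi.add_apply, he, he'], fun i => ?_⟩
    by_cases h : (i : ℕ) < n - 1 <;> simp [Pi.add_apply, ha i, hb i, h]
  zero_mem' := by
    refine ⟨0, C.zero_mem, 0, C'.zero_mem, rfl, fun i => ?_⟩
    by_cases h : (i : ℕ) < n - 1 <;> simp [h]
  smul_mem' := by
    rintro t x ⟨c, hc, c', hc', he, hx⟩
    refine ⟨t • c, C.smul_mem t hc, t • c', C'.smul_mem t hc',
      by simp [Pi.smul_apply, he], fun i => ?_⟩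
    by_cases h : (i : ℕ) < n - 1 <;> simp [Pi.smul_apply, hx i, h]

/-- Condition (A1): no word of `C` supported on the last three coordinates has
Hamming weight 1 or 2 there. -/
def NoLowWtTail {n : ℕ} (C : Code n) : Prop :=
  ∀ c ∈ C, (∀ i : Fin n, (i : ℕ) < n - 3 → c i = 0) →
    ((∀ i : Fin n, n - 3 ≤ (i : ℕ) → c i = 0) ∨ (∀ i : Fin n, n - 3 ≤ (i : ℕ) → c i = 1))

/-- Condition (A2): no word of `C'` supported on the first three coordinates has
Hamming weight 1 or 2 there. -/
def NoLowWtHead {n : ℕ} (C : Code n) : Prop :=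
  ∀ c ∈ C, (∀ i : Fin n, 3 ≤ (i : ℕ) → c i = 0) →
    ((∀ i : Fin n, (i : ℕ) < 3 → c i = 0) ∨ (∀ i : Fin n, (i : ℕ) < 3 → c i = 1))

/-- Codes `C ⊆ 𝔽₂ⁿ`, `C' ⊆ 𝔽₂^n'` (with `n, n' ≥ 7`) are 3-summable: (A1), (A2), (A3). -/
def ThreeSummable {n n' : ℕ} (C : Code n) (C' : Code n') : Prop :=
  7 ≤ n ∧ 7 ≤ n' ∧ NoLowWtTail C ∧ NoLowWtTail (dualCode C) ∧
    NoLowWtHead C' ∧ NoLowWtHead (dualCode C') ∧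
    omegaLast n ∈ C ∧ omegaFirst n' ∈ C'

/-- The 3-sum `C ⊕₃ C'`. -/
def threeSum {n n' : ℕ} (C : Code n) (C' : Code n') (hn : 7 ≤ n) (hn' : 7 ≤ n') :
    Code (n - 3 + (n' - 3)) where
  carrier := {x | ∃ c ∈ C, ∃ c' ∈ C',
    (∀ t : Fin 3, c ⟨n - 3 + (t : ℕ), by have := t.isLt; omega⟩
        = c' ⟨(t : ℕ), by have := t.isLt; omega⟩) ∧
    ∀ i : Fin (n - 3 + (n' - 3)),
      x i = if h : (i : ℕ) < n - 3 then c ⟨(i : ℕ), by omega⟩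
            else c' ⟨(i : ℕ) - (n - 3) + 3, by have := i.isLt; omega⟩}
  add_mem' := by
    rintro a b ⟨c, hc, c', hc', he, ha⟩ ⟨d, hd, d', hd', he', hb⟩
    refine ⟨c + d, C.add_mem hc hd, c' + d', C'.add_mem hc' hd',
      fun t => by simp [Pi.add_apply, he t, he' t], fun i => ?_⟩
    by_cases h : (i : ℕ) < n - 3 <;> simp [Pi.add_apply, ha i, hb i, h]
  zero_mem' := by
    refine ⟨0, C.zero_mem, 0, C'.zero_mem, fun t => rfl, fun i => ?_⟩
    by_cases h : (i : ℕ) < n - 3 <;> simp [h]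
  smul_mem' := by
    rintro t x ⟨c, hc, c', hc', he, hx⟩
    refine ⟨t • c, C.smul_mem t hc, t • c', C'.smul_mem t hc',
      fun s => by simp [Pi.smul_apply, he s], fun i => ?_⟩
    by_cases h : (i : ℕ) < n - 3 <;> simp [Pi.smul_apply, hx i, h]

/-- Codes `C`, `C'` (with `n, n' ≥ 7`) are 3̄-summable: (A1), (A2), (A3'). -/
def ThreeBarSummable {n n' : ℕ} (C : Code n) (C' : Code n') : Prop :=
  7 ≤ n ∧ 7 ≤ n' ∧ NoLowWtTail C ∧ NoLowWtTail (dualCode C) ∧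
    NoLowWtHead C' ∧ NoLowWtHead (dualCode C') ∧
    omegaLast n ∈ dualCode C ∧ omegaFirst n' ∈ dualCode C'

/-- `C̄ = C ∪ ((0,…,0,1,1,1) + C)`, as a submodule. -/
def extendLast {n : ℕ} (C : Code n) : Code n :=
  C ⊔ Submodule.span (ZMod 2) {omegaLast n}

/-- `C̄' = C' ∪ ((1,1,1,0,…,0) + C')`, as a submodule. -/
def extendFirst {n : ℕ} (C : Code n) : Code n :=
  C ⊔ Submodule.span (ZMod 2) {omegaFirst n}

/-- The 3̄-sum `C ⊕̄₃ C' = C̄ ⊕₃ C̄'`. -/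
def threeBarSum {n n' : ℕ} (C : Code n) (C' : Code n') (hn : 7 ≤ n) (hn' : 7 ≤ n') :
    Code (n - 3 + (n' - 3)) :=
  threeSum (extendLast C) (extendFirst C') hn hn'

/-- The minimum Hamming distance (minimum weight of a nonzero codeword). -/
noncomputable def minDist {n : ℕ} (C : Code n) : ℕ :=
  sInf {w | ∃ c ∈ C, c ≠ 0 ∧ hammingNorm c = w}

/-- `C` is graphic: it has a parity-check matrix, each column of which has at most
two nonzero entries (a vertex–edge incidence matrix of a multigraph). -/
def IsGraphic {n : ℕ} (C : Code n) : Prop :=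
  ∃ (m : ℕ) (H : Matrix (Fin m) (Fin n) (ZMod 2)),
    C = LinearMap.ker (Matrix.mulVecLin H) ∧
    ∀ j : Fin n, ({i : Fin m | H i j ≠ 0} : Set (Fin m)).ncard ≤ 2

/-- `C` is regular: some parity-check matrix of `C` has a totally unimodular signing. -/
def IsRegularCode {n : ℕ} (C : Code n) : Prop :=
  ∃ (m : ℕ) (H : Matrix (Fin m) (Fin n) (ZMod 2)),
    C = LinearMap.ker (Matrix.mulVecLin H) ∧
    ∃ A : Matrix (Fin m) (Fin n) ℝ,
      (∀ i j, H i j = 0 → A i j = 0) ∧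
      (∀ i j, H i j = 1 → (A i j = 1 ∨ A i j = -1)) ∧
      A.IsTotallyUnimodular

/-- The 3×7 parity-check matrix of the `[7,4]` Hamming code: the `j`-th column is the
binary representation of `j` (for `j = 1, …, 7`). -/
def hammingMatrix : Matrix (Fin 3) (Fin 7) (ZMod 2) :=
  fun i j => if Nat.testBit ((j : ℕ) + 1) (i : ℕ) then 1 else 0

/-- The `[7,4]` Hamming code `H₇`. -/
def hammingCode : Code 7 := LinearMap.ker (Matrix.mulVecLin hammingMatrix)

/-- Generator matrix of `C(K₅)⊥`. -/
def K5perpGen : Matrix (Fin 4) (Fin 10) (ZMod 2) :=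
  !![1,0,0,0,1,1,1,0,0,0;
     0,1,0,0,1,0,0,1,1,0;
     0,0,1,0,0,1,0,1,0,1;
     0,0,0,1,0,0,1,0,1,1]

/-- The `[10,4]` code `C(K₅)⊥`. -/
def codeK5perp : Code 10 := Submodule.span (ZMod 2) (Set.range (fun i => K5perpGen i))

/-- Generator matrix of `C(K₃,₃)⊥`. -/
def K33perpGen : Matrix (Fin 5) (Fin 9) (ZMod 2) :=
  !![1,0,0,0,0,1,1,0,0;
     0,1,0,0,0,0,1,1,0;
     0,0,1,0,0,0,0,1,1;
     0,0,0,1,0,1,0,0,1;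
     0,0,0,0,1,1,1,1,1]

/-- The `[9,5]` code `C(K₃,₃)⊥`. -/
def codeK33perp : Code 9 := Submodule.span (ZMod 2) (Set.range (fun i => K33perpGen i))

/-- Parity-check matrix of `R₁₀`. -/
def R10Matrix : Matrix (Fin 5) (Fin 10) (ZMod 2) :=
  !![1,1,0,0,1,1,0,0,0,0;
     1,1,1,0,0,0,1,0,0,0;
     0,1,1,1,0,0,0,1,0,0;
     0,0,1,1,1,0,0,0,1,0;
     1,0,0,1,1,0,0,0,0,1]

/-- The `[10,5]` code `R₁₀`. -/
def codeR10 : Code 10 := LinearMap.ker (Matrix.mulVecLin R10Matrix)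

/-- The embedding `𝔽₂ⁿ ↪ ℝⁿ` identifying `𝔽₂` with `{0,1} ⊆ ℝ`. -/
def toReal {n : ℕ} (c : Fin n → ZMod 2) : Fin n → ℝ := fun i => ((c i).val : ℝ)

/-- The codeword polytope `P(C)`: the convex hull in `ℝⁿ` of a set of codewords. -/
def codewordPolytope {n : ℕ} (C : Set (Fin n → ZMod 2)) : Set (Fin n → ℝ) :=
  convexHull ℝ (toReal '' C)

/-- The fundamental polytope `Q(H) = ⋂_{h ∈ H} P(h⊥)` (with `Q(∅) = [0,1]ⁿ`). -/
def Qpoly {n : ℕ} (H : Set (Fin n → ZMod 2)) : Set (Fin n → ℝ) :=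
  {x | ∀ i, x i ∈ Set.Icc (0 : ℝ) 1} ∩
    ⋂ h ∈ H, codewordPolytope {c | ∑ i, h i * c i = 0}

/-- `C` is geometrically perfect: `P(C) = Q(C⊥)`. -/
def GeomPerfect {n : ℕ} (C : Code n) : Prop :=
  codewordPolytope (C : Set (Fin n → ZMod 2)) = Qpoly (dualCode C : Set (Fin n → ZMod 2))

/-- A family of binary linear codes (one set of codes for each length), closed under
taking codes equivalent to minors of its members. -/
noncomputable def MinorClosedFamily (F : ∀ n : ℕ, Set (Code n)) : Prop :=
  ∀ (n m : ℕ) (C : Code n) (D : Code m), C ∈ F n → EquivToMinor D C → D ∈ F m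

/-- An almost-graphic family of codes. -/
noncomputable def AlmostGraphic (F : ∀ n : ℕ, Set (Code n)) : Prop :=
  MinorClosedFamily F ∧
  ∃ D : ∀ n : ℕ, Set (Code n),
    (∀ n, D n ⊆ F n) ∧
    {p : (n : ℕ) × Code n | p.2 ∈ D p.1}.Finite ∧
    ∀ (n : ℕ) (C : Code n), C ∈ F n → KConnected 2 C →
      (IsGraphic C ∨ C ∈ D n) ∨
      (∃ (n₁ n₂ : ℕ) (hn₁ : 3 ≤ n₁) (hn₂ : 3 ≤ n₂) (C₁ : Code n₁) (C₂ : Code n₂),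
        TwoSummable C₁ C₂ ∧ EquivToMinor C₁ C ∧ EquivToMinor C₂ C ∧
        (IsGraphic C₁ ∨ C₁ ∈ D n₁) ∧ KConnected 2 C₂ ∧
        CodeEquiv C (twoSum C₁ C₂ hn₁ hn₂)) ∨
      (∃ (n₁ n₂ : ℕ) (hn₁ : 7 ≤ n₁) (hn₂ : 7 ≤ n₂) (C₁ : Code n₁) (C₂ : Code n₂),
        ThreeBarSummable C₁ C₂ ∧ EquivToMinor C₁ C ∧ EquivToMinor C₂ C ∧
        (IsGraphic C₁ ∨ C₁ ∈ D n₁) ∧ KConnected 2 C₂ ∧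
        CodeEquiv C (threeBarSum C₁ C₂ hn₁ hn₂))


section TwoSumDualAux


lemma sum_split_last {M : Type*} [AddCommMonoid M] {m : ℕ} (hm : 1 ≤ m) (f : Fin m → M) :
    ∑ i, f i = (∑ i : Fin (m-1), f ⟨i, by omega⟩) + f ⟨m-1, by omega⟩ := by
  obtain ⟨k, rfl⟩ : ∃ k, m = k + 1 := ⟨m - 1, by omega⟩
  rw [Fin.sum_univ_castSucc]
  rfl

lemma sum_split_first {M : Type*} [AddCommMonoid M] {m : ℕ} (hm : 1 ≤ m) (f : Fin m → M) :
    ∑ i, f i = f ⟨0, by omega⟩ + ∑ i : Fin (m-1), f ⟨(i : ℕ) + 1, by omega⟩ := by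
  obtain ⟨k, rfl⟩ : ∃ k, m = k + 1 := ⟨m - 1, by omega⟩
  rw [Fin.sum_univ_succ]
  rfl

section glue
variable {n n' : ℕ}

def dL (x : Fin (n-1+(n'-1)) → ZMod 2) (α : ZMod 2) : Fin n → ZMod 2 :=
  fun i => if h : (i : ℕ) < n - 1 then x (Fin.castAdd (n'-1) ⟨i, h⟩) else α

def dR (x : Fin (n-1+(n'-1)) → ZMod 2) (α : ZMod 2) : Fin n' → ZMod 2 :=
  fun j => if h : (j : ℕ) = 0 then α
    else x (Fin.natAdd (n-1) ⟨(j : ℕ) - 1, by have := j.isLt; omega⟩)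

def lS (x : Fin (n-1+(n'-1)) → ZMod 2) (c : Fin n → ZMod 2) : ZMod 2 :=
  ∑ i : Fin (n-1), x (Fin.castAdd (n'-1) i) * c ⟨(i : ℕ), by have := i.isLt; omega⟩

def rS (x : Fin (n-1+(n'-1)) → ZMod 2) (c' : Fin n' → ZMod 2) : ZMod 2 :=
  ∑ i : Fin (n'-1), x (Fin.natAdd (n-1) i) * c' ⟨(i : ℕ) + 1, by have := i.isLt; omega⟩

lemma lS_add (x : Fin (n-1+(n'-1)) → ZMod 2) (c d : Fin n → ZMod 2) :
    lS x (c + d) = lS x c + lS x d := by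
  simp [lS, mul_add, Finset.sum_add_distrib]

lemma rS_add (x : Fin (n-1+(n'-1)) → ZMod 2) (c d : Fin n' → ZMod 2) :
    rS x (c + d) = rS x c + rS x d := by
  simp [rS, mul_add, Finset.sum_add_distrib]

lemma lS_zero (x : Fin (n-1+(n'-1)) → ZMod 2) : lS x (0 : Fin n → ZMod 2) = 0 := by simp [lS]
lemma rS_zero (x : Fin (n-1+(n'-1)) → ZMod 2) : rS x (0 : Fin n' → ZMod 2) = 0 := by simp [rS]

lemma sum_mul_glue (hn : 3 ≤ n) (hn' : 3 ≤ n')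
    (x g : Fin (n-1+(n'-1)) → ZMod 2) (c : Fin n → ZMod 2) (c' : Fin n' → ZMod 2)
    (hg : ∀ i : Fin (n-1+(n'-1)), g i =
      if h : (i : ℕ) < n - 1 then c ⟨(i : ℕ), by omega⟩
      else c' ⟨(i : ℕ) - (n-1) + 1, by have := i.isLt; omega⟩) :
    ∑ i, x i * g i = lS x c + rS x c' := by
  rw [Fin.sum_univ_add]
  congr 1
  · refine Finset.sum_congr rfl fun i _ => ?_
    have h : ((Fin.castAdd (n'-1) i : Fin (n-1+(n'-1))) : ℕ) < n - 1 := by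
      simpa using i.isLt
    rw [hg, dif_pos h]
    rfl
  · refine Finset.sum_congr rfl fun i _ => ?_
    have h : ¬ ((Fin.natAdd (n-1) i : Fin (n-1+(n'-1))) : ℕ) < n - 1 := by
      simp
    rw [hg, dif_neg h]
    congr 1
    exact Fin.ext (by simp)

lemma sum_dL_mul (hn : 3 ≤ n) (x : Fin (n-1+(n'-1)) → ZMod 2) (α : ZMod 2)
    (c : Fin n → ZMod 2) :
    ∑ i : Fin n, dL x α i * c i = lS x c + α * c ⟨n-1, by omega⟩ := by
  rw [sum_split_last (by omega : 1 ≤ n)]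
  congr 1
  · refine Finset.sum_congr rfl fun i _ => ?_
    have h : ((⟨(i : ℕ), by omega⟩ : Fin n) : ℕ) < n - 1 := i.isLt
    rw [show dL x α ⟨(i : ℕ), by omega⟩ = x (Fin.castAdd (n'-1) ⟨(i:ℕ), h⟩) from dif_pos h]
  · rw [show dL x α ⟨n-1, by omega⟩ = α from dif_neg (by simp)]

lemma sum_dR_mul (hn : 3 ≤ n') (x : Fin (n-1+(n'-1)) → ZMod 2) (α : ZMod 2)
    (c' : Fin n' → ZMod 2) :
    ∑ j : Fin n', dR x α j * c' j = α * c' ⟨0, by omega⟩ + rS x c' := by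
  rw [sum_split_first (by omega : 1 ≤ n')]
  congr 1

lemma glue_dL_dR (hn : 3 ≤ n) (hn' : 3 ≤ n') (x : Fin (n-1+(n'-1)) → ZMod 2) (α : ZMod 2) :
    ∀ i : Fin (n-1+(n'-1)), x i =
      if h : (i : ℕ) < n - 1 then dL x α ⟨(i : ℕ), by omega⟩
      else dR (n := n) x α ⟨(i : ℕ) - (n-1) + 1, by have := i.isLt; omega⟩ := by
  intro i
  by_cases h : (i : ℕ) < n - 1
  · rw [dif_pos h, show dL x α ⟨(i : ℕ), by omega⟩ = x (Fin.castAdd (n'-1) ⟨(i:ℕ), h⟩)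
      from dif_pos h]
    exact (congrArg x (Fin.ext (by simp))).symm
  · rw [dif_neg h]
    rw [show dR (n := n) x α ⟨(i : ℕ) - (n-1) + 1, by have := i.isLt; omega⟩
        = x (Fin.natAdd (n-1) ⟨(i:ℕ) - (n-1) + 1 - 1, by have := i.isLt; omega⟩)
      from dif_neg (by simp)]
    congr 1
    exact Fin.ext (by simp; omega)

end glue

def dotB (n : ℕ) : LinearMap.BilinForm (ZMod 2) (Fin n → ZMod 2) :=
  LinearMap.mk₂ (ZMod 2) (fun x y => ∑ i, x i * y i)
    (fun x x' y => by simp [add_mul, Finset.sum_add_distrib])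
    (fun t x y => by simp [Finset.mul_sum, mul_assoc])
    (fun x y y' => by simp [mul_add, Finset.sum_add_distrib])
    (fun t x y => by simp [Finset.mul_sum, mul_left_comm])

lemma dotB_nondegenerate (n : ℕ) : (dotB n).Nondegenerate := by
  refine ⟨fun x hx => ?_, fun x hx => ?_⟩
  · funext i
    have := hx (Pi.single i 1)
    simpa [dotB, Pi.single_apply, Finset.sum_ite_eq'] using this
  · funext i
    have := hx (Pi.single i 1)
    simpa [dotB, Pi.single_apply, Finset.sum_ite_eq'] using this

lemma dotB_refl (n : ℕ) : (dotB n).IsRefl := by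
  intro x y h
  simpa [dotB, mul_comm] using h

lemma dualCode_eq_orthogonal {n : ℕ} (C : Code n) : dualCode C = (dotB n).orthogonal C := by
  ext x
  constructor
  · intro hx c hc
    simpa [dotB, LinearMap.BilinForm.IsOrtho, mul_comm] using hx c hc
  · intro hx c hc
    simpa [dotB, LinearMap.BilinForm.IsOrtho, mul_comm] using hx c hc

lemma ddual {n : ℕ} (C : Code n) : dualCode (dualCode C) = C := by
  rw [dualCode_eq_orthogonal, dualCode_eq_orthogonal]
  exact LinearMap.BilinForm.orthogonal_orthogonal (dotB_nondegenerate n) (dotB_refl n) C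

lemma mem_dualCode {n : ℕ} {C : Code n} {x : Fin n → ZMod 2} :
    x ∈ dualCode C ↔ ∀ c ∈ C, ∑ i, x i * c i = 0 := Iff.rfl

lemma mem_twoSum {n n' : ℕ} {C : Code n} {C' : Code n'} {hn : 3 ≤ n} {hn' : 3 ≤ n'}
    {x : Fin (n - 1 + (n' - 1)) → ZMod 2} :
    x ∈ twoSum C C' hn hn' ↔ ∃ c ∈ C, ∃ c' ∈ C',
      c ⟨n - 1, by omega⟩ = c' ⟨0, by omega⟩ ∧
      ∀ i : Fin (n - 1 + (n' - 1)),
        x i = if h : (i : ℕ) < n - 1 then c ⟨(i : ℕ), by omega⟩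
              else c' ⟨(i : ℕ) - (n - 1) + 1, by have := i.isLt; omega⟩ := Iff.rfl

lemma sum_unitLast {n : ℕ} (hn : 1 ≤ n) (c : Fin n → ZMod 2) :
    ∑ i, unitLast n i * c i = c ⟨n - 1, by omega⟩ := by
  rw [sum_split_last hn]
  have h1 : unitLast n ⟨n - 1, by omega⟩ = 1 := if_pos rfl
  have h0 : ∀ i : Fin (n - 1), unitLast n ⟨(i : ℕ), by omega⟩ = 0 :=
    fun i => if_neg (show ¬ (i : ℕ) = n - 1 from by have := i.isLt; omega)
  rw [h1, one_mul, Finset.sum_eq_zero fun i _ => by rw [h0 i, zero_mul], zero_add]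

lemma sum_unitFirst {n : ℕ} (hn : 1 ≤ n) (c : Fin n → ZMod 2) :
    ∑ i, unitFirst n i * c i = c ⟨0, by omega⟩ := by
  rw [sum_split_first hn]
  have h1 : unitFirst n ⟨0, by omega⟩ = 1 := if_pos rfl
  have h0 : ∀ i : Fin (n - 1), unitFirst n ⟨(i : ℕ) + 1, by omega⟩ = 0 :=
    fun i => if_neg (show ¬ (i : ℕ) + 1 = 0 from by omega)
  rw [h1, one_mul, Finset.sum_eq_zero fun i _ => by rw [h0 i, zero_mul], add_zero]

end TwoSumDualAux

/-- the dual of a 2-sum is the 2-sum of the duals. -/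
theorem twoSum_dual {n n' : ℕ} (C : Code n) (C' : Code n') (h : TwoSummable C C') :
    TwoSummable (dualCode C) (dualCode C') ∧
    dualCode (twoSum C C' h.1 h.2.1) =
      twoSum (dualCode C) (dualCode C') h.1 h.2.1 := by
  have hn : 3 ≤ n := h.1
  have hn' : 3 ≤ n' := h.2.1
  have hCn : unitLast n ∉ C := h.2.2.1
  have hCd : unitLast n ∉ dualCode C := h.2.2.2.1
  have hC'n : unitFirst n' ∉ C' := h.2.2.2.2.1
  have hC'd : unitFirst n' ∉ dualCode C' := h.2.2.2.2.2
  have z1 : ∀ a : ZMod 2, a ≠ 0 → a = 1 := by decide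
  have z2 : ∀ a b : ZMod 2, a + b = 0 → a = b := by decide
  have z3 : ∀ a : ZMod 2, a + a = 0 := by decide
  have z4 : ∀ a : ZMod 2, a = 0 ∨ a = 1 := by decide
  refine ⟨⟨hn, hn', hCd, by rw [ddual]; exact hCn, hC'd, by rw [ddual]; exact hC'n⟩, ?_⟩
  ext x
  rw [mem_twoSum, mem_dualCode]
  constructor
  · intro hx
    have key : ∀ c ∈ C, ∀ c' ∈ C', c ⟨n - 1, by omega⟩ = c' ⟨0, by omega⟩ →
        lS x c + rS x c' = 0 := by
      intro c hc c' hc' he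
      have hg : (fun i : Fin (n - 1 + (n' - 1)) =>
          if h2 : (i : ℕ) < n - 1 then c ⟨(i : ℕ), by omega⟩
          else c' ⟨(i : ℕ) - (n - 1) + 1, by have := i.isLt; omega⟩) ∈ twoSum C C' h.1 h.2.1 :=
        mem_twoSum.mpr ⟨c, hc, c', hc', he, fun i => rfl⟩
      have h0 := hx _ hg
      rwa [sum_mul_glue hn hn' x _ c c' (fun i => rfl)] at h0
    have hl0 : ∀ c ∈ C, c ⟨n - 1, by omega⟩ = 0 → lS x c = 0 := by
      intro c hc h0
      have := key c hc 0 C'.zero_mem (by simpa using h0)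
      simpa [rS_zero] using this
    have hr0 : ∀ c' ∈ C', c' ⟨0, by omega⟩ = 0 → rS x c' = 0 := by
      intro c' hc' h0
      have := key 0 C.zero_mem c' hc' (by simpa using h0.symm)
      simpa [lS_zero] using this
    obtain ⟨cs, hcs, hcs1⟩ : ∃ cs ∈ C, cs ⟨n - 1, by omega⟩ = 1 := by
      by_contra hcon
      push_neg at hcon
      refine hCd (mem_dualCode.mpr fun c hc => ?_)
      rw [sum_unitLast (by omega)]
      rcases z4 (c ⟨n - 1, by omega⟩) with h0 | h1
      · exact h0
      · exact absurd h1 (hcon c hc)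
    obtain ⟨cs', hcs', hcs'1⟩ : ∃ cs' ∈ C', cs' ⟨0, by omega⟩ = 1 := by
      by_contra hcon
      push_neg at hcon
      refine hC'd (mem_dualCode.mpr fun c hc => ?_)
      rw [sum_unitFirst (by omega)]
      rcases z4 (c ⟨0, by omega⟩) with h0 | h1
      · exact h0
      · exact absurd h1 (hcon c hc)
    have hdL : dL x (lS x cs) ∈ dualCode C := by
      refine mem_dualCode.mpr fun c hc => ?_
      rw [sum_dL_mul hn]
      rcases z4 (c ⟨n - 1, by omega⟩) with h0 | h1
      · rw [h0, mul_zero, add_zero]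
        exact hl0 c hc h0
      · rw [h1, mul_one]
        have h2 : lS x (c + cs) = 0 :=
          hl0 _ (C.add_mem hc hcs) (by rw [Pi.add_apply, h1, hcs1]; decide)
        rwa [lS_add] at h2
    have hrcs' : rS x cs' = lS x cs :=
      (z2 _ _ (key cs hcs cs' hcs' (by rw [hcs1, hcs'1]))).symm
    have hdR : dR (n := n) x (lS x cs) ∈ dualCode C' := by
      refine mem_dualCode.mpr fun c' hc' => ?_
      rw [sum_dR_mul hn']
      rcases z4 (c' ⟨0, by omega⟩) with h0 | h1
      · rw [h0, mul_zero, zero_add]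
        exact hr0 c' hc' h0
      · rw [h1, mul_one]
        have h2 : rS x (c' + cs') = 0 :=
          hr0 _ (C'.add_mem hc' hcs') (by rw [Pi.add_apply, h1, hcs'1]; decide)
        rw [rS_add, hrcs'] at h2
        rwa [add_comm] at h2
    refine ⟨dL x (lS x cs), hdL, dR x (lS x cs), hdR, ?_, glue_dL_dR hn hn' x (lS x cs)⟩
    exact (dif_neg (by simp) : dL (n' := n') x (lS x cs) ⟨n - 1, by omega⟩ = _).trans
      (dif_pos rfl : dR (n := n) x (lS x cs) ⟨0, by omega⟩ = _).symm
  · rintro ⟨d, hd, d', hd', he, hxe⟩ g hg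
    obtain ⟨c, hc, c', hc', hce, hge⟩ := mem_twoSum.mp hg
    rw [sum_mul_glue hn hn' x g c c' hge]
    have hdc := mem_dualCode.mp hd c hc
    rw [sum_split_last (by omega : 1 ≤ n)] at hdc
    have hdc' := mem_dualCode.mp hd' c' hc'
    rw [sum_split_first (by omega : 1 ≤ n')] at hdc'
    have hlc : lS x c = ∑ i : Fin (n - 1),
        d ⟨(i : ℕ), by omega⟩ * c ⟨(i : ℕ), by omega⟩ := by
      refine Finset.sum_congr rfl fun i _ => ?_
      have hlt : ((Fin.castAdd (n' - 1) i : Fin (n - 1 + (n' - 1))) : ℕ) < n - 1 := by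
        simpa using i.isLt
      rw [hxe (Fin.castAdd (n' - 1) i), dif_pos hlt]
      exact congrArg₂ (· * ·) (congrArg d (Fin.ext (by simp))) rfl
    have hrc : rS x c' = ∑ i : Fin (n' - 1),
        d' ⟨(i : ℕ) + 1, by omega⟩ * c' ⟨(i : ℕ) + 1, by omega⟩ := by
      refine Finset.sum_congr rfl fun i _ => ?_
      have hlt : ¬ ((Fin.natAdd (n - 1) i : Fin (n - 1 + (n' - 1))) : ℕ) < n - 1 := by simp
      rw [hxe (Fin.natAdd (n - 1) i), dif_neg hlt]
      congr 1
      exact congrArg d' (Fin.ext (by simp))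
    rw [hlc, hrc, z2 _ _ hdc, (z2 _ _ hdc').symm, he, hce]
    exact z3 _
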